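/- Let F be a 3-uniform hypergraph, A ⊆ V(F) a good set, and U ⊆ V(F) a set not fully contained in A. Then Δ(U) ≥ |A ∩ U| + 1. -/

import Mathlib

/-- A 3-uniform hypergraph on vertex type `V`: a finite set of edges, each of size 3. -/
structure Hypergraph3 (V : Type*) where
  edges : Finset (Finset V)
  card3 : ∀ e ∈ edges, e.card = 3

variable {V : Type*} [DecidableEq V]

/-- The edges of `F` contained in the vertex set `U`. -/
def edgesIn (F : Hypergraph3 V) (U : Finset V) : Finset (Finset V) :=
  F.edges.filter (fun e => e ⊆ U)

/-- The deficiency `Δ(U) = |U| - e(F[U])`. -/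
def defic (F : Hypergraph3 V) (U : Finset V) : ℤ :=
  (U.card : ℤ) - ((edgesIn F U).card : ℤ)

/-- `A` is independent in `F` if no edge of `F` is contained in `A`. -/
def Indep (F : Hypergraph3 V) (A : Finset V) : Prop :=
  ∀ e ∈ F.edges, ¬ e ⊆ A

/-- `A` is good: independent, and every strict superset `U` has `Δ(U) ≥ |A| + 1`. -/
def Good (F : Hypergraph3 V) (A : Finset V) : Prop :=
  Indep F A ∧ ∀ U : Finset V, A ⊂ U → (A.card : ℤ) + 1 ≤ defic F U

/-! Enlarging `U` to `A ∪ U` adds the `|A \ U|` vertices of `A` outside `U` and can only add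
edges, so `Δ(U) ≥ Δ(A ∪ U) - |A \ U|`. Since `A ⊊ A ∪ U`, goodness gives
`Δ(A ∪ U) ≥ |A| + 1 = |A ∩ U| + |A \ U| + 1`. -/

theorem edgesIn_mono (F : Hypergraph3 V) {U W : Finset V} (h : U ⊆ W) :
    edgesIn F U ⊆ edgesIn F W :=
  Finset.monotone_filter_right _ fun _ _ he => he.trans h

theorem defic_le_defic_add_card_sdiff (F : Hypergraph3 V) {U W : Finset V} (h : U ⊆ W) :
    defic F W ≤ defic F U + (W \ U).card := by
  have hW : (W \ U).card + U.card = W.card := Finset.card_sdiff_add_card_eq_card h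
  have hE := Finset.card_le_card (edgesIn_mono F h)
  unfold defic
  omega

/-- if `A` is good and `U` is not contained in `A`, then `Δ(U) ≥ |A ∩ U| + 1`. -/
theorem defic_ge_of_good_of_not_subset (F : Hypergraph3 V) (A U : Finset V)
    (hA : Good F A) (hU : ¬ U ⊆ A) : ((A ∩ U).card : ℤ) + 1 ≤ defic F U := by
  have hgood : (A.card : ℤ) + 1 ≤ defic F (A ∪ U) := hA.2 _ (left_lt_sup.2 hU)
  have hrestrict : defic F (A ∪ U) ≤ defic F U + (A \ U).card := by
    simpa only [Finset.union_sdiff_right] using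
      defic_le_defic_add_card_sdiff F (Finset.subset_union_right (s₁ := A) (s₂ := U))
  have hsplit := Finset.card_inter_add_card_sdiff A U
  omega
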